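/- arXiv:0811.4321 — 4 statements merged into one kernel-verified Lean document; each statement's English description precedes it below -/
import Mathlib

section
/- Let k be a positive integer. For a multi-index α = (α₁, α₂, ...) of nonnegative integers with finite support, define (2ℕ)^α = ∏_j (2j)^{α_j}. Then the sum ∑_{α ∈ ℓ} (2ℕ)^{-kα}, taken over the set ℓ of all finitely supported multi-indices, is finite if and only if k > 1. -/
/-- The weight `(2ℕ)^α = ∏_j (2j)^{α_j}` for a finitely supported multi-index `α`,
indexing the entries by `j = 1, 2, ...` (so position `j : ℕ` carries factor `2(j+1)`). -/
noncomputable def wt (α : ℕ →₀ ℕ) : ℕ :=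
  α.prod fun j a => (2 * (j + 1)) ^ a

/-!
The weight is multiplicative in the entries of `α`, so each finite partial sum of the series is
at most a finite product `∏_j ∑_a (2j)^{-ka}`, whose factors are at most
`1 + 2(2j)^{-k} ≤ exp (2(2j)^{-k})`. Hence the series converges as soon as `∑_j (2j)^{-k}` does,
i.e. when `k > 1`. Conversely, the multi-indices with a single entry `1` already contribute
the series `∑_j (2j)^{-k}`.
-/

open Finset

theorem Finset.sum_finsupp_prod {ι M R : Type*} [DecidableEq ι] [Zero M] [CommSemiring R]
    (s : Finset ι) (t : ι → Finset M) (g : ι → M → R) (hg : ∀ i, g i 0 = 1) :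
    ∑ f ∈ s.finsupp t, f.prod g = ∏ i ∈ s, ∑ a ∈ t i, g i a := by
  rw [prod_sum, Finset.finsupp, sum_map]
  refine sum_congr (by congr!) fun p _ => ?_
  rw [Function.Embedding.coeFn_mk,
    Finsupp.prod_of_support_subset _ (Finsupp.support_indicator_subset s p) g fun i _ => hg i,
    ← prod_attach]
  exact prod_congr rfl fun i _ => by rw [Finsupp.indicator_of_mem i.2]

theorem Finsupp.sum_Iic_prod_pow {ι R : Type*} [DecidableEq ι] [CommSemiring R]
    (β : ι →₀ ℕ) (r : ι → R) :
    ∑ α ∈ Iic β, α.prod (fun i a => r i ^ a) = ∏ i ∈ β.support, ∑ a ∈ Iic (β i), r i ^ a := by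
  rw [Iic_eq_Icc, bot_eq_zero, Finsupp.Icc_eq, Finsupp.support_zero, empty_union,
    sum_finsupp_prod _ _ _ fun i => pow_zero (r i)]
  simp only [Finsupp.coe_rangeIcc, Finsupp.coe_zero, Pi.zero_apply, Iic_eq_Icc, bot_eq_zero']

theorem Real.sum_pow_le_exp_two_mul {x : ℝ} (hx₀ : 0 ≤ x) (hx : x ≤ 1 / 2) (T : Finset ℕ) :
    ∑ a ∈ T, x ^ a ≤ Real.exp (2 * x) :=
  calc ∑ a ∈ T, x ^ a
      ≤ ∑' a, x ^ a := (summable_geometric_of_lt_one hx₀ (by linarith)).sum_le_tsum T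
        fun a _ => pow_nonneg hx₀ a
    _ = (1 - x)⁻¹ := tsum_geometric_of_lt_one hx₀ (by linarith)
    _ ≤ 1 + 2 * x := by
        rw [inv_le_iff_one_le_mul₀ (by linarith)]
        nlinarith
    _ ≤ Real.exp (2 * x) := by linarith [Real.add_one_le_exp (2 * x)]

theorem summable_finsupp_prod_pow {ι : Type*} {r : ι → ℝ} (hr₀ : ∀ i, 0 ≤ r i)
    (hr : ∀ i, r i ≤ 1 / 2) (hsum : Summable r) :
    Summable fun α : ι →₀ ℕ => α.prod fun i a => r i ^ a := by
  classical
  refine summable_of_sum_le (c := Real.exp (∑' i, 2 * r i))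
    (fun α => prod_nonneg fun i _ => pow_nonneg (hr₀ i) _) fun u => ?_
  have hu : u ⊆ Iic (u.sup id) := fun α hα => mem_Iic.mpr (le_sup (f := id) hα)
  calc ∑ α ∈ u, α.prod (fun i a => r i ^ a)
      ≤ ∑ α ∈ Iic (u.sup id), α.prod (fun i a => r i ^ a) :=
        sum_le_sum_of_subset_of_nonneg hu fun α _ _ =>
          prod_nonneg fun i _ => pow_nonneg (hr₀ i) _
    _ = ∏ i ∈ (u.sup id).support, ∑ a ∈ Iic (u.sup id i), r i ^ a :=
        Finsupp.sum_Iic_prod_pow _ r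
    _ ≤ ∏ i ∈ (u.sup id).support, Real.exp (2 * r i) :=
        prod_le_prod (fun i _ => sum_nonneg fun a _ => pow_nonneg (hr₀ i) a)
          fun i _ => Real.sum_pow_le_exp_two_mul (hr₀ i) (hr i) _
    _ = Real.exp (∑ i ∈ (u.sup id).support, 2 * r i) := (Real.exp_sum _ _).symm
    _ ≤ Real.exp (∑' i, 2 * r i) := Real.exp_le_exp.mpr <|
        (hsum.mul_left 2).sum_le_tsum _ fun i _ => mul_nonneg zero_le_two (hr₀ i)

theorem wt_single (j a : ℕ) : wt (Finsupp.single j a) = (2 * (j + 1)) ^ a :=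
  Finsupp.prod_single_index (pow_zero _)

theorem inv_wt_pow_eq_prod (k : ℕ) (α : ℕ →₀ ℕ) :
    ((wt α : ℝ) ^ k)⁻¹ = α.prod fun j a => ((((2 * (j + 1) : ℕ) : ℝ) ^ k)⁻¹) ^ a := by
  rw [wt, Finsupp.prod, Finsupp.prod, Nat.cast_prod, ← prod_pow, ← prod_inv_distrib]
  refine prod_congr rfl fun j _ => ?_
  rw [Nat.cast_pow, ← pow_mul, inv_pow, ← pow_mul, Nat.mul_comm k]

theorem summable_inv_two_mul_succ_pow_iff {k : ℕ} :
    (Summable fun j : ℕ => (((2 * (j + 1) : ℕ) : ℝ) ^ k)⁻¹) ↔ 1 < k := by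
  have h : ∀ j : ℕ, (((2 * (j + 1) : ℕ) : ℝ) ^ k)⁻¹ = (2 ^ k)⁻¹ * (((j + 1 : ℕ) : ℝ) ^ k)⁻¹ :=
    fun j => by push_cast; rw [mul_pow, mul_inv]
  simp_rw [h]
  rw [summable_mul_left_iff (by positivity),
    summable_nat_add_iff (f := fun n : ℕ => ((n : ℝ) ^ k)⁻¹) 1, Real.summable_nat_pow_inv]

theorem inv_two_mul_succ_pow_le_half {k : ℕ} (hk : 1 ≤ k) (j : ℕ) :
    (((2 * (j + 1) : ℕ) : ℝ) ^ k)⁻¹ ≤ 1 / 2 := by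
  have h2 : (2 : ℝ) ≤ ((2 * (j + 1) : ℕ) : ℝ) := by
    exact_mod_cast Nat.le_mul_of_pos_right 2 j.succ_pos
  calc (((2 * (j + 1) : ℕ) : ℝ) ^ k)⁻¹ ≤ (((2 * (j + 1) : ℕ) : ℝ) ^ 1)⁻¹ := by
        gcongr
        linarith
    _ ≤ 1 / 2 := by
        rw [pow_one, one_div]
        gcongr

theorem stmt0_general (k : ℕ) :
    (Summable fun α : ℕ →₀ ℕ => ((wt α : ℝ) ^ k)⁻¹) ↔ 1 < k := by
  refine ⟨fun hs => ?_, fun hk => ?_⟩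
  · have hsingle := hs.comp_injective (Finsupp.single_left_injective one_ne_zero)
    simp only [Function.comp_def, wt_single, pow_one] at hsingle
    exact summable_inv_two_mul_succ_pow_iff.mp hsingle
  · simp_rw [inv_wt_pow_eq_prod]
    exact summable_finsupp_prod_pow (fun j => by positivity)
      (inv_two_mul_succ_pow_le_half hk.le) (summable_inv_two_mul_succ_pow_iff.mpr hk)

/-- The sum `∑_{α ∈ ℓ} (2ℕ)^{-kα}` over all finitely supported multi-indices `α`
is finite if and only if `k > 1`. -/
theorem stmt0 (k : ℕ) (hk : 0 < k) :
    (Summable fun α : ℕ →₀ ℕ => ((wt α : ℝ) ^ k)⁻¹) ↔ 1 < k :=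
  stmt0_general k
end

section
/- Let H be a Hilbert space and let (h_n)_{n≥0} be a sequence in H. There exists M > 0 such that (∑_{n=0}^∞ ‖y_n‖²)^{1/2} ≤ M ∑_{n=0}^∞ ‖u_n‖ for all complex sequences (u_n) with ∑‖u_n‖ < ∞, where y_n = ∑_{m=0}^n u_m h_{n−m}, if and only if ∑_{n=0}^∞ ‖h_n‖² < ∞ (i.e., the transfer function ∑ ζⁿ h_n lies in the H-valued Hardy space H²(𝔻) ⊗ H). -/
/-!
The input `δ₀` (the unit impulse) is absolutely summable with `‖δ₀‖₁ = 1` and its output is `h`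
itself, so stability forces `h ∈ ℓ²`. Conversely, weighting the Cauchy–Schwarz inequality by
`|u_m|` gives `‖y_n‖² ≤ ‖u‖₁ ∑_{m ≤ n} |u_m| ‖h_{n-m}‖²`, and the right-hand side is the Cauchy
product of `|u|` and `‖h‖²`, whose sum is `‖u‖₁ ‖h‖₂²`; hence `‖y‖₂ ≤ ‖h‖₂ ‖u‖₁`
(Young's inequality `ℓ¹ ∗ ℓ² ⊆ ℓ²`).
-/

open Finset

lemma sq_sum_mul_le_sum_mul_sum_mul_sq {ι R : Type*} [CommSemiring R] [LinearOrder R]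
    [IsStrictOrderedRing R] [ExistsAddOfLE R] (s : Finset ι) {a : ι → R} (b : ι → R)
    (ha : ∀ i ∈ s, 0 ≤ a i) :
    (∑ i ∈ s, a i * b i) ^ 2 ≤ (∑ i ∈ s, a i) * ∑ i ∈ s, a i * b i ^ 2 :=
  sum_sq_le_sum_mul_sum_of_sq_le_mul s ha (fun i hi => mul_nonneg (ha i hi) (sq_nonneg _))
    fun i _ => le_of_eq (by ring)

section CausalConv

variable {𝕜 E : Type*} [NormedField 𝕜] [NormedAddCommGroup E]

lemma hasSum_sum_range_norm_mul_sq_norm {u : ℕ → 𝕜} {h : ℕ → E} (hu : Summable fun n => ‖u n‖)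
    (hh : Summable fun n => ‖h n‖ ^ 2) :
    HasSum (fun n => ∑ m ∈ range (n + 1), ‖u m‖ * ‖h (n - m)‖ ^ 2)
      ((∑' n, ‖u n‖) * ∑' n, ‖h n‖ ^ 2) :=
  hasSum_sum_range_mul_of_summable_norm (f := fun n => ‖u n‖) (g := fun n => ‖h n‖ ^ 2)
    (by simpa using hu) (by simpa using hh)

variable [NormedSpace 𝕜 E]

def causalConv (u : ℕ → 𝕜) (h : ℕ → E) (n : ℕ) : E :=
  ∑ m ∈ range (n + 1), u m • h (n - m)

lemma causalConv_single_zero (h : ℕ → E) : causalConv (Pi.single 0 1 : ℕ → 𝕜) h = h := by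
  ext n
  rw [causalConv, sum_eq_single 0 (fun m _ hm => by simp [hm]) (by simp)]
  simp

lemma summable_norm_single_zero_one : Summable fun n => ‖(Pi.single 0 1 : ℕ → 𝕜) n‖ :=
  summable_of_ne_finset_zero (s := {0}) fun n hn => by simp_all

variable {u : ℕ → 𝕜} {h : ℕ → E}

lemma sq_norm_causalConv_le (hu : Summable fun n => ‖u n‖) (n : ℕ) :
    ‖causalConv u h n‖ ^ 2 ≤ (∑' m, ‖u m‖) * ∑ m ∈ range (n + 1), ‖u m‖ * ‖h (n - m)‖ ^ 2 := by
  have hnorm : ‖causalConv u h n‖ ≤ ∑ m ∈ range (n + 1), ‖u m‖ * ‖h (n - m)‖ :=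
    (norm_sum_le _ _).trans_eq (sum_congr rfl fun m _ => norm_smul _ _)
  have hpartial : ∑ m ∈ range (n + 1), ‖u m‖ ≤ ∑' m, ‖u m‖ :=
    hu.sum_le_tsum _ fun m _ => norm_nonneg _
  calc ‖causalConv u h n‖ ^ 2
      ≤ (∑ m ∈ range (n + 1), ‖u m‖ * ‖h (n - m)‖) ^ 2 := by gcongr
    _ ≤ (∑ m ∈ range (n + 1), ‖u m‖) * ∑ m ∈ range (n + 1), ‖u m‖ * ‖h (n - m)‖ ^ 2 :=
        sq_sum_mul_le_sum_mul_sum_mul_sq _ _ fun m _ => norm_nonneg _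
    _ ≤ _ := by gcongr

lemma summable_sq_norm_causalConv (hu : Summable fun n => ‖u n‖)
    (hh : Summable fun n => ‖h n‖ ^ 2) : Summable fun n => ‖causalConv u h n‖ ^ 2 :=
  .of_nonneg_of_le (fun _ => sq_nonneg _) (sq_norm_causalConv_le hu)
    ((hasSum_sum_range_norm_mul_sq_norm hu hh).summable.mul_left _)

lemma sqrt_tsum_sq_norm_causalConv_le (hu : Summable fun n => ‖u n‖)
    (hh : Summable fun n => ‖h n‖ ^ 2) :
    √(∑' n, ‖causalConv u h n‖ ^ 2) ≤ √(∑' n, ‖h n‖ ^ 2) * ∑' n, ‖u n‖ := by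
  have hconv := hasSum_sum_range_norm_mul_sq_norm hu hh
  have htsum : ∑' n, ‖causalConv u h n‖ ^ 2 ≤ (∑' n, ‖u n‖) ^ 2 * ∑' n, ‖h n‖ ^ 2 :=
    calc ∑' n, ‖causalConv u h n‖ ^ 2
        ≤ ∑' n, (∑' m, ‖u m‖) * ∑ m ∈ range (n + 1), ‖u m‖ * ‖h (n - m)‖ ^ 2 :=
          (summable_sq_norm_causalConv hu hh).tsum_le_tsum (sq_norm_causalConv_le hu)
            (hconv.summable.mul_left _)
      _ = (∑' n, ‖u n‖) ^ 2 * ∑' n, ‖h n‖ ^ 2 := by rw [tsum_mul_left, hconv.tsum_eq]; ring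
  calc √(∑' n, ‖causalConv u h n‖ ^ 2)
      ≤ √((∑' n, ‖u n‖) ^ 2 * ∑' n, ‖h n‖ ^ 2) := Real.sqrt_le_sqrt htsum
    _ = √(∑' n, ‖h n‖ ^ 2) * ∑' n, ‖u n‖ := by
        rw [Real.sqrt_mul (sq_nonneg _), Real.sqrt_sq (tsum_nonneg fun _ => norm_nonneg _),
          mul_comm]

end CausalConv

/-- ℓ¹-ℓ² stability for H-valued causal systems: there is `M > 0` with
`(∑ ‖y_n‖²)^{1/2} ≤ M ∑ ‖u_n‖` for every absolutely summable scalar input,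
where `y_n = ∑_{m=0}^n u_m h_{n-m}`, if and only if `∑ ‖h_n‖² < ∞` (i.e. the transfer
function `∑ ζⁿ h_n` lies in the `H`-valued Hardy space `H²(𝔻) ⊗ H`). -/
theorem stmt8 {H : Type*} [NormedAddCommGroup H] [NormedSpace ℂ H]
    (h : ℕ → H) :
    (∃ M > (0 : ℝ), ∀ u : ℕ → ℂ, Summable (fun n => ‖u n‖) →
        (Summable fun n => ‖∑ m ∈ Finset.range (n + 1), u m • h (n - m)‖ ^ 2) ∧
        Real.sqrt (∑' n, ‖∑ m ∈ Finset.range (n + 1), u m • h (n - m)‖ ^ 2) ≤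
          M * ∑' n, ‖u n‖) ↔
      Summable fun n => ‖h n‖ ^ 2 := by
  constructor
  · rintro ⟨M, -, hM⟩
    have hy : Summable fun n => ‖causalConv (Pi.single 0 1 : ℕ → ℂ) h n‖ ^ 2 :=
      (hM _ summable_norm_single_zero_one).1
    rwa [causalConv_single_zero] at hy
  · intro hh
    refine ⟨√(∑' n, ‖h n‖ ^ 2) + 1, by positivity, fun u hu =>
      ⟨summable_sq_norm_causalConv hu hh, ?_⟩⟩
    calc √(∑' n, ‖causalConv u h n‖ ^ 2)
        ≤ √(∑' n, ‖h n‖ ^ 2) * ∑' n, ‖u n‖ := sqrt_tsum_sq_norm_causalConv_le hu hh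
      _ ≤ (√(∑' n, ‖h n‖ ^ 2) + 1) * ∑' n, ‖u n‖ := by
          gcongr
          linarith
end

section
/- Let (h_n)_{n≥0} be complex numbers. The causal convolution system y_n = ∑_{m=0}^n h_{n−m} u_m satisfies: there exists M such that (∑|y_n|²)^{1/2} ≤ M ∑|u_n| for all absolutely summable inputs (u_n), if and only if ∑_{n=0}^∞ |h_n|² < ∞. Moreover, M can be taken to be the H²-norm of the transfer function. -/
open Finset

private lemma key9 (h u : ℕ → ℂ) (hs : Summable fun n => ‖h n‖ ^ 2)
    (hu : Summable fun n => ‖u n‖) (N : ℕ) :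
    ∑ n ∈ range N, ‖∑ m ∈ range (n + 1), h (n - m) * u m‖ ^ 2 ≤
      (Real.sqrt (∑' n, ‖h n‖ ^ 2) * ∑' n, ‖u n‖) ^ 2 := by
  set S := ∑' n, ‖h n‖ ^ 2 with hSdef
  set T := ∑' n, ‖u n‖ with hTdef
  have hS0 : 0 ≤ S := tsum_nonneg fun n => by positivity
  have hT0 : 0 ≤ T := tsum_nonneg fun n => norm_nonneg _
  set f : ℕ → EuclideanSpace ℂ (Fin N) := fun m =>
    WithLp.toLp 2 (fun i : Fin N => if m ≤ (i : ℕ) then h ((i : ℕ) - m) * u m else 0) with hf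
  have hfnorm : ∀ m, ‖f m‖ ≤ ‖u m‖ * Real.sqrt S := by
    intro m
    rw [EuclideanSpace.norm_eq]
    have hb : ∑ i : Fin N, ‖f m i‖ ^ 2 ≤ ‖u m‖ ^ 2 * S := by
      have hterm : ∀ i : Fin N, ‖f m i‖ ^ 2 =
          if m ≤ (i : ℕ) then ‖u m‖ ^ 2 * ‖h ((i : ℕ) - m)‖ ^ 2 else 0 := by
        intro i
        simp only [hf, PiLp.toLp_apply]
        split_ifs with hmi
        · rw [norm_mul]; ring
        · simp
      rw [Finset.sum_congr rfl fun i _ => hterm i, Finset.sum_ite, Finset.sum_const,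
        smul_zero, add_zero, ← Finset.mul_sum]
      apply mul_le_mul_of_nonneg_left _ (by positivity)
      calc ∑ i ∈ Finset.univ.filter (fun i : Fin N => m ≤ (i : ℕ)), ‖h ((i : ℕ) - m)‖ ^ 2
          = ∑ k ∈ (Finset.univ.filter (fun i : Fin N => m ≤ (i : ℕ))).image
              (fun i : Fin N => (i : ℕ) - m), ‖h k‖ ^ 2 := by
            rw [Finset.sum_image]
            intro a ha b hb hab
            simp only [Finset.mem_coe, Finset.mem_filter] at ha hb
            exact Fin.ext (by simp only at hab; omega)
        _ ≤ S := Summable.sum_le_tsum _ (fun k _ => by positivity) hs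
    calc Real.sqrt (∑ i : Fin N, ‖f m i‖ ^ 2) ≤ Real.sqrt (‖u m‖ ^ 2 * S) :=
          Real.sqrt_le_sqrt hb
      _ = ‖u m‖ * Real.sqrt S := by
          rw [Real.sqrt_mul (by positivity), Real.sqrt_sq (norm_nonneg _)]
  set Y : EuclideanSpace ℂ (Fin N) := ∑ m ∈ range N, f m with hY
  have hYi : ∀ i : Fin N, Y i = ∑ m ∈ range ((i : ℕ) + 1), h ((i : ℕ) - m) * u m := by
    intro i
    have : Y i = ∑ m ∈ range N, f m i := by
      rw [hY, WithLp.ofLp_sum]; exact Finset.sum_apply i (range N) _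
    rw [this]
    have hfilter : (range N).filter (fun m => m ≤ (i : ℕ)) = range ((i : ℕ) + 1) := by
      ext m
      simp only [Finset.mem_filter, Finset.mem_range, Nat.lt_succ_iff]
      have := i.isLt
      omega
    calc ∑ m ∈ range N, f m i
        = ∑ m ∈ (range N).filter (fun m => m ≤ (i : ℕ)), h ((i : ℕ) - m) * u m := by
          simp only [hf, PiLp.toLp_apply]
          rw [Finset.sum_ite, Finset.sum_const, smul_zero, add_zero]
      _ = ∑ m ∈ range ((i : ℕ) + 1), h ((i : ℕ) - m) * u m := by rw [hfilter]
  have hsum : ∑ n ∈ range N, ‖∑ m ∈ range (n + 1), h (n - m) * u m‖ ^ 2 = ‖Y‖ ^ 2 := by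
    rw [EuclideanSpace.norm_eq, Real.sq_sqrt (by positivity)]
    rw [← Fin.sum_univ_eq_sum_range (fun n => ‖∑ m ∈ range (n + 1), h (n - m) * u m‖ ^ 2) N]
    exact Finset.sum_congr rfl fun i _ => by rw [hYi i]
  rw [hsum]
  have hnY : ‖Y‖ ≤ Real.sqrt S * T := by
    calc ‖Y‖ ≤ ∑ m ∈ range N, ‖f m‖ := norm_sum_le _ _
      _ ≤ ∑ m ∈ range N, ‖u m‖ * Real.sqrt S :=
          Finset.sum_le_sum fun m _ => hfnorm m
      _ = (∑ m ∈ range N, ‖u m‖) * Real.sqrt S := by rw [← Finset.sum_mul]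
      _ ≤ T * Real.sqrt S := by
          apply mul_le_mul_of_nonneg_right _ (Real.sqrt_nonneg _)
          exact Summable.sum_le_tsum _ (fun k _ => norm_nonneg _) hu
      _ = Real.sqrt S * T := mul_comm _ _
  exact pow_le_pow_left₀ (norm_nonneg _) hnY 2

/-- ℓ¹-ℓ² boundedness for scalar causal systems: the system
`y_n = ∑_{m=0}^n h_{n-m} u_m` admits an `M` with `(∑|y_n|²)^{1/2} ≤ M ∑|u_n|` for all
absolutely summable inputs if and only if `∑ |h_n|² < ∞`; moreover `M` can then be
taken to be the `H²(𝔻)`-norm `(∑ |h_n|²)^{1/2}` of the transfer function. -/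
theorem stmt9 (h : ℕ → ℂ) :
    ((∃ M : ℝ, ∀ u : ℕ → ℂ, Summable (fun n => ‖u n‖) →
        (Summable fun n => ‖∑ m ∈ Finset.range (n + 1), h (n - m) * u m‖ ^ 2) ∧
        Real.sqrt (∑' n, ‖∑ m ∈ Finset.range (n + 1), h (n - m) * u m‖ ^ 2) ≤
          M * ∑' n, ‖u n‖) ↔
      Summable fun n => ‖h n‖ ^ 2) ∧
    ((Summable fun n => ‖h n‖ ^ 2) → ∀ u : ℕ → ℂ, Summable (fun n => ‖u n‖) →
        Real.sqrt (∑' n, ‖∑ m ∈ Finset.range (n + 1), h (n - m) * u m‖ ^ 2) ≤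
          Real.sqrt (∑' n, ‖h n‖ ^ 2) * ∑' n, ‖u n‖) := by
  have main : ∀ (hs : Summable fun n => ‖h n‖ ^ 2) (u : ℕ → ℂ)
      (hu : Summable (fun n => ‖u n‖)),
      (Summable fun n => ‖∑ m ∈ Finset.range (n + 1), h (n - m) * u m‖ ^ 2) ∧
      Real.sqrt (∑' n, ‖∑ m ∈ Finset.range (n + 1), h (n - m) * u m‖ ^ 2) ≤
        Real.sqrt (∑' n, ‖h n‖ ^ 2) * ∑' n, ‖u n‖ := by
    intro hs u hu
    have hkey := key9 h u hs hu
    have hsumm : Summable fun n => ‖∑ m ∈ Finset.range (n + 1), h (n - m) * u m‖ ^ 2 :=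
      summable_of_sum_range_le (fun n => by positivity) hkey
    refine ⟨hsumm, ?_⟩
    have htsum : (∑' n, ‖∑ m ∈ Finset.range (n + 1), h (n - m) * u m‖ ^ 2) ≤
        (Real.sqrt (∑' n, ‖h n‖ ^ 2) * ∑' n, ‖u n‖) ^ 2 :=
      Summable.tsum_le_of_sum_range_le hsumm (fun n => hkey n)
    calc Real.sqrt (∑' n, ‖∑ m ∈ Finset.range (n + 1), h (n - m) * u m‖ ^ 2)
        ≤ Real.sqrt ((Real.sqrt (∑' n, ‖h n‖ ^ 2) * ∑' n, ‖u n‖) ^ 2) :=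
          Real.sqrt_le_sqrt htsum
      _ = Real.sqrt (∑' n, ‖h n‖ ^ 2) * ∑' n, ‖u n‖ := by
          apply Real.sqrt_sq
          have : (0:ℝ) ≤ ∑' n, ‖u n‖ := tsum_nonneg fun n => norm_nonneg _
          positivity
  constructor
  · constructor
    · rintro ⟨M, hM⟩
      set u₀ : ℕ → ℂ := fun n => if n = 0 then 1 else 0 with hu₀
      have hu₀s : Summable fun n => ‖u₀ n‖ := by
        apply summable_of_ne_finset_zero (s := {0})
        intro n hn
        simp only [Finset.mem_singleton] at hn
        simp [hu₀, hn]
      have := (hM u₀ hu₀s).1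
      have heq : ∀ n, (∑ m ∈ Finset.range (n + 1), h (n - m) * u₀ m) = h n := by
        intro n
        rw [Finset.sum_eq_single 0]
        · simp [hu₀]
        · intro m _ hm; simp [hu₀, hm]
        · intro habs; simp at habs
      simpa only [heq] using this
    · intro hs
      exact ⟨Real.sqrt (∑' n, ‖h n‖ ^ 2), fun u hu => main hs u hu⟩
  · intro hs u hu
    exact (main hs u hu).2
end

section
/- Let H be a Hilbert space and let T be a bounded linear operator from the H-valued Hardy space H²(𝔻) ⊗ H into itself that commutes with the operator M_ζ of multiplication by the coordinate ζ. Then there exists a function S, analytic on the open unit disk with values in L(H), with ‖S(ζ)‖ ≤ ‖T‖ for all ζ ∈ 𝔻, such that (Tf)(ζ) = S(ζ) f(ζ) for all f ∈ H²(𝔻)⊗H and ζ ∈ 𝔻. If moreover T is a contraction, then S(ζ) is a contraction for every ζ ∈ 𝔻. -/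
/-!
Evaluation at `ζ ∈ 𝔻`, `e_ζ f = ∑ ζⁿ fₙ`, is a power series in `ζ` whose operator coefficients
have norm `≤ 1`, so `S(ζ) = e_ζ ∘ T ∘ ι₀` (with `ι₀` the inclusion of constants) is holomorphic on
the disc. Since `T` commutes with the shift, `e_ζ (T (zᵏ x)) = ζᵏ S(ζ) x`, and expanding
`f = ∑ zᵏ fₖ` gives `e_ζ (T f) = S(ζ) (e_ζ f)`. The adjoint `e_ζ*` maps `x` to the reproducing
kernel `((conj ζ)ⁿ x)ₙ`, so `e_ζ e_ζ* = (1 - |ζ|²)⁻¹` and `(1 - |ζ|²)⁻¹ S(ζ) = e_ζ T e_ζ*`; with the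
C*-identity `‖e_ζ‖² = ‖e_ζ e_ζ*‖` this gives `‖S(ζ)‖ ≤ ‖T‖`.
-/

open Metric

section PowerSeries

variable {𝕜 E : Type*} [NontriviallyNormedField 𝕜] [NormedAddCommGroup E] [NormedSpace 𝕜 E]
  [CompleteSpace E] {a : ℕ → E} {C : ℝ}

theorem summable_pow_smul_of_norm_le (ha : ∀ n, ‖a n‖ ≤ C) {z : 𝕜} (hz : ‖z‖ < 1) :
    Summable fun n => z ^ n • a n := by
  refine .of_norm_bounded ((summable_geometric_of_lt_one (norm_nonneg z) hz).mul_right C)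
    fun n => ?_
  rw [norm_smul, norm_pow]
  exact mul_le_mul_of_nonneg_left (ha n) (by positivity)

theorem differentiableOn_tsum_pow_smul_of_norm_le (ha : ∀ n, ‖a n‖ ≤ C) :
    DifferentiableOn 𝕜 (fun z : 𝕜 => ∑' n, z ^ n • a n) (ball 0 1) := by
  let p : FormalMultilinearSeries 𝕜 𝕜 E := fun n => .mkPiRing 𝕜 (Fin n) (a n)
  have hcoeff (n : ℕ) : p.coeff n = a n := by simp [p, FormalMultilinearSeries.coeff]
  have hradius : 1 ≤ p.radius := by
    refine ENNReal.le_of_forall_nnreal_lt fun r hr => p.le_radius_of_bound C fun n => ?_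
    rw [FormalMultilinearSeries.norm_apply_eq_norm_coef, hcoeff]
    have hr1 : (r : ℝ) ≤ 1 := by exact_mod_cast hr.le
    exact (mul_le_of_le_one_right (norm_nonneg _) (pow_le_one₀ r.coe_nonneg hr1)).trans (ha n)
  have hball : ball (0 : 𝕜) 1 ⊆ eball 0 p.radius := by
    rw [← NNReal.coe_one, ← eball_coe]
    exact eball_subset_eball (by simpa using hradius)
  refine ((p.hasFPowerSeriesOnBall (one_pos.trans_le hradius)).differentiableOn.mono hball).congr
    fun z _ => ?_
  simp [FormalMultilinearSeries.sum, hcoeff]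

end PowerSeries

namespace HardySpace

local notation "ℓ²(" E ")" => lp (fun _ : ℕ => E) 2

section Evaluation

variable {𝕜 E : Type*} [NontriviallyNormedField 𝕜] [NormedAddCommGroup E] [NormedSpace 𝕜 E]
  {ζ : 𝕜}

@[simp]
theorem evalCLM_apply (n : ℕ) (f : ℓ²(E)) : lp.evalCLM 𝕜 (fun _ : ℕ => E) 2 n f = f n := rfl

theorem norm_evalCLM_le (n : ℕ) : ‖lp.evalCLM 𝕜 (fun _ : ℕ => E) 2 n‖ ≤ 1 :=
  ContinuousLinearMap.opNorm_le_bound _ zero_le_one fun f => by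
    simpa using lp.norm_apply_le_norm two_ne_zero f n

def IsShift (u v : ℕ → E) : Prop := v 0 = 0 ∧ ∀ n, v (n + 1) = u n

theorem isShift_single (n : ℕ) (x : E) :
    IsShift (lp.single 2 n x : ℕ → E) (lp.single 2 (n + 1) x : ℕ → E) := by
  simp [IsShift, Pi.single_apply]

variable [CompleteSpace E]

variable (E) in
-- For `‖ζ‖ ≥ 1` the series of operators is not summable, and then this is `0`.
noncomputable def evalAt (ζ : 𝕜) : ℓ²(E) →L[𝕜] E :=
  ∑' n, ζ ^ n • lp.evalCLM 𝕜 (fun _ : ℕ => E) 2 n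

theorem differentiableOn_evalAt : DifferentiableOn 𝕜 (evalAt (𝕜 := 𝕜) E) (ball 0 1) :=
  differentiableOn_tsum_pow_smul_of_norm_le norm_evalCLM_le

theorem hasSum_evalAt (hζ : ‖ζ‖ < 1) (f : ℓ²(E)) :
    HasSum (fun n => ζ ^ n • f n) (evalAt E ζ f) := by
  simpa [evalAt] using ((summable_pow_smul_of_norm_le norm_evalCLM_le hζ).hasSum.mapL
    (ContinuousLinearMap.apply 𝕜 E f))

theorem evalAt_apply (hζ : ‖ζ‖ < 1) (f : ℓ²(E)) : evalAt E ζ f = ∑' n, ζ ^ n • f n :=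
  (hasSum_evalAt hζ f).tsum_eq.symm

theorem evalAt_single (hζ : ‖ζ‖ < 1) (n : ℕ) (x : E) :
    evalAt E ζ (lp.single 2 n x) = ζ ^ n • x := by
  refine (hasSum_evalAt hζ _).unique ?_
  convert hasSum_single n fun k hk => ?_
  · simp
  · simp [Pi.single_eq_of_ne hk]

theorem evalAt_of_isShift (hζ : ‖ζ‖ < 1) {u v : ℓ²(E)} (h : IsShift u v) :
    evalAt E ζ v = ζ • evalAt E ζ u := by
  refine (hasSum_evalAt hζ v).unique ((hasSum_nat_add_iff' 1).mp ?_)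
  simpa [h.1, h.2, pow_succ', mul_smul] using (hasSum_evalAt hζ u).const_smul ζ

variable (T : ℓ²(E) →L[𝕜] ℓ²(E))

noncomputable def symbol (ζ : 𝕜) : E →L[𝕜] E :=
  evalAt E ζ ∘L T ∘L lp.singleContinuousLinearMap 𝕜 (fun _ : ℕ => E) 2 0

theorem differentiableOn_symbol : DifferentiableOn 𝕜 (symbol T) (ball 0 1) :=
  differentiableOn_evalAt.clm_comp (differentiableOn_const _)

variable {T}

theorem evalAt_apply_single (hT : ∀ u v : ℓ²(E), IsShift u v → IsShift (T u) (T v))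
    (hζ : ‖ζ‖ < 1) (n : ℕ) (x : E) :
    evalAt E ζ (T (lp.single 2 n x)) = ζ ^ n • symbol T ζ x := by
  induction n with
  | zero => simp [symbol]
  | succ n ih =>
    rw [evalAt_of_isShift hζ (hT _ _ (isShift_single n x)), ih, smul_smul, pow_succ']

theorem symbol_evalAt (hT : ∀ u v : ℓ²(E), IsShift u v → IsShift (T u) (T v))
    (hζ : ‖ζ‖ < 1) (f : ℓ²(E)) : symbol T ζ (evalAt E ζ f) = evalAt E ζ (T f) := by
  have hleft : HasSum (fun n => ζ ^ n • symbol T ζ (f n)) (symbol T ζ (evalAt E ζ f)) := by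
    simpa using (hasSum_evalAt hζ f).mapL (symbol T ζ)
  have hright : HasSum (fun n => ζ ^ n • symbol T ζ (f n)) (evalAt E ζ (T f)) := by
    simpa [evalAt_apply_single hT hζ] using
      (lp.hasSum_single (by norm_num) f).mapL (evalAt E ζ ∘L T)
  exact hleft.unique hright

end Evaluation

section Hilbert

open scoped InnerProduct ComplexConjugate

variable {𝕜 E : Type*} [RCLike 𝕜] [NormedAddCommGroup E] [InnerProductSpace 𝕜 E]
  [CompleteSpace E] {T : ℓ²(E) →L[𝕜] ℓ²(E)} {ζ : 𝕜}

theorem adjoint_evalAt_apply (hζ : ‖ζ‖ < 1) (x : E) (n : ℕ) :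
    ((evalAt E ζ)†) x n = conj ζ ^ n • x := by
  refine ext_inner_left 𝕜 fun y =>
    (lp.inner_single_left n y (((evalAt E ζ)†) x)).symm.trans ?_
  rw [ContinuousLinearMap.adjoint_inner_right, evalAt_single hζ,
    inner_smul_left, inner_smul_right, map_pow]

theorem norm_mul_conj_lt_one (hζ : ‖ζ‖ < 1) : ‖ζ * conj ζ‖ < 1 := by
  rw [norm_mul, RCLike.norm_conj]
  nlinarith [norm_nonneg ζ]

theorem evalAt_comp_adjoint (hζ : ‖ζ‖ < 1) :
    evalAt E ζ ∘L (evalAt E ζ)† = (1 - ζ * conj ζ)⁻¹ • ContinuousLinearMap.id 𝕜 E := by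
  ext x
  refine (hasSum_evalAt hζ _).unique ?_
  simpa [adjoint_evalAt_apply hζ, smul_smul, mul_pow] using
    (hasSum_geometric_of_norm_lt_one (norm_mul_conj_lt_one hζ)).smul_const x

theorem smul_symbol_eq (hT : ∀ u v : ℓ²(E), IsShift u v → IsShift (T u) (T v))
    (hζ : ‖ζ‖ < 1) :
    (1 - ζ * conj ζ)⁻¹ • symbol T ζ = evalAt E ζ ∘L T ∘L (evalAt E ζ)† := by
  ext x
  have hx := congr($(evalAt_comp_adjoint (E := E) hζ) x)
  simp only [ContinuousLinearMap.comp_apply, FunLike.coe_smul, Pi.smul_apply,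
    ContinuousLinearMap.id_apply] at hx ⊢
  rw [← map_smul, ← hx, symbol_evalAt hT hζ]

theorem norm_symbol_le (hT : ∀ u v : ℓ²(E), IsShift u v → IsShift (T u) (T v))
    (hζ : ‖ζ‖ < 1) : ‖symbol T ζ‖ ≤ ‖T‖ := by
  set c : 𝕜 := (1 - ζ * conj ζ)⁻¹
  have hc : 0 < ‖c‖ := by
    refine norm_pos_iff.mpr (inv_ne_zero (sub_ne_zero.mpr fun h => ?_))
    simpa [← h] using norm_mul_conj_lt_one hζ
  set A := evalAt E ζ
  have hA : ‖A ∘L A†‖ = ‖A‖ * ‖A‖ := by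
    simpa [LinearIsometryEquiv.norm_map] using (A†).norm_adjoint_comp_self
  refine le_of_mul_le_mul_left ?_ hc
  calc ‖c‖ * ‖symbol T ζ‖ = ‖A ∘L T ∘L A†‖ := by rw [← smul_symbol_eq hT hζ, norm_smul]
    _ ≤ ‖A‖ * (‖T‖ * ‖A†‖) :=
      (A.opNorm_comp_le _).trans (mul_le_mul_of_nonneg_left (T.opNorm_comp_le _) (norm_nonneg _))
    _ = ‖A ∘L A†‖ * ‖T‖ := by
      rw [hA, LinearIsometryEquiv.norm_map]
      ring
    _ ≤ ‖c‖ * ‖T‖ := by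
      rw [evalAt_comp_adjoint hζ]
      gcongr
      exact (norm_smul_le _ _).trans (mul_le_of_le_one_right (norm_nonneg _)
        ContinuousLinearMap.norm_id_le)

end Hilbert

end HardySpace

open HardySpace in
/-- Operator-valued commutant lifting: a bounded operator `T` on the `H`-valued Hardy
space `H²(𝔻) ⊗ H` (realized as `ℓ²(ℕ, H)` of Taylor coefficients) commuting with
multiplication by `ζ` (the shift) is given by multiplication by an `L(H)`-valued
function `S`, analytic on `𝔻`, with `‖S(ζ)‖ ≤ ‖T‖` there; and if `T` is a contraction
then each `S(ζ)` is a contraction. -/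
theorem stmt10 {H : Type*} [NormedAddCommGroup H] [InnerProductSpace ℂ H]
    [CompleteSpace H]
    (T : lp (fun _ : ℕ => H) 2 →L[ℂ] lp (fun _ : ℕ => H) 2)
    (hcomm : ∀ u v : lp (fun _ : ℕ => H) 2,
      ((v : ∀ _ : ℕ, H) 0 = 0 ∧ ∀ n : ℕ, (v : ∀ _ : ℕ, H) (n + 1) = (u : ∀ _ : ℕ, H) n) →
      (T v : ∀ _ : ℕ, H) 0 = 0 ∧ ∀ n : ℕ, (T v : ∀ _ : ℕ, H) (n + 1) = (T u : ∀ _ : ℕ, H) n) :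
    ∃ S : ℂ → H →L[ℂ] H,
      DifferentiableOn ℂ S (ball (0 : ℂ) 1) ∧
      (∀ ζ ∈ ball (0 : ℂ) 1, ‖S ζ‖ ≤ ‖T‖) ∧
      (∀ (f : lp (fun _ : ℕ => H) 2), ∀ ζ ∈ ball (0 : ℂ) 1,
        S ζ (∑' n : ℕ, ζ ^ n • (f : ∀ _ : ℕ, H) n) =
          ∑' n : ℕ, ζ ^ n • (T f : ∀ _ : ℕ, H) n) ∧
      (‖T‖ ≤ 1 → ∀ ζ ∈ ball (0 : ℂ) 1, ‖S ζ‖ ≤ 1) := by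
  have hnorm : ∀ ζ ∈ ball (0 : ℂ) 1, ‖symbol T ζ‖ ≤ ‖T‖ := fun ζ hζ =>
    norm_symbol_le hcomm (mem_ball_zero_iff.mp hζ)
  refine ⟨symbol T, differentiableOn_symbol T, hnorm, fun f ζ hζ => ?_,
    fun hT ζ hζ => (hnorm ζ hζ).trans hT⟩
  rw [mem_ball_zero_iff] at hζ
  rw [← evalAt_apply hζ, ← evalAt_apply hζ, symbol_evalAt hcomm hζ]
end
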